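/- The number D(m,n) of lattice paths from (0,0) to (m,n) using steps (1,0), (0,1), (1,1) (the Delannoy number) equals the number of 2n-insets of a set with n main blocks each of size 2 and an additional block of size m; equivalently D(m,n) = Σ_{i=0}^{m} 2^i C(m,i) C(n,i). -/

import Mathlib

/-- The Delannoy number `delannoy m n`: the number of lattice paths from `(0,0)` to `(m,n)`
using steps `(1,0)`, `(0,1)` and `(1,1)`, defined via the standard recurrence
`D(m,0) = D(0,n) = 1`, `D(m+1,n+1) = D(m,n+1) + D(m+1,n) + D(m,n)`. -/
def delannoy : ℕ → ℕ → ℕ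
  | _, 0 => 1
  | 0, _ + 1 => 1
  | m + 1, n + 1 => delannoy m (n + 1) + delannoy (m + 1) n + delannoy m n
  termination_by m n => (m, n)

/-- `insetCount n m k q` is the number of `(n+k)`-insets: subsets of cardinality `n + k` of
the disjoint union of main blocks of sizes `q 0, …, q (n-1)` and an additional block of
size `m`, meeting every main block. -/
def insetCount (n m : ℕ) (k : ℤ) (q : Fin n → ℕ) : ℕ :=
  (Finset.univ.filter
    (fun S : Finset ((Σ i : Fin n, Fin (q i)) ⊕ Fin m) =>
      (S.card : ℤ) = n + k ∧ ∀ i : Fin n, ∃ x : Fin (q i), Sum.inl ⟨i, x⟩ ∈ S)).card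

/-!
An inset meets each two-element main block either in one of its points or in the whole block, so
the insets are enumerated by size by `(X² + 2X)ⁿ (X + 1)ᵐ`. The coefficient of `X²ⁿ` chooses `i`
blocks met in a single point (`2ⁱ C(n,i)` ways) and `i` points of the additional block (`C(m,i)`
ways). The resulting sum `∑ᵢ 2ⁱ C(m,i) C(n,i)` satisfies the Delannoy recurrence by Pascal's rule,
applied once in each variable.
-/

open Finset Polynomial

def delannoySum (m n : ℕ) : ℕ := ∑ i ∈ range (m + 1), 2 ^ i * m.choose i * n.choose i

lemma delannoySum_comm (m n : ℕ) : delannoySum m n = delannoySum n m := by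
  have hext (a b : ℕ) :
      delannoySum a b = ∑ i ∈ range (a + b + 1), 2 ^ i * a.choose i * b.choose i := by
    refine (eventually_constant_sum (fun i hi => ?_) (by omega)).symm
    rw [Nat.choose_eq_zero_of_lt (by omega : a < i), mul_zero, zero_mul]
  rw [hext, hext, add_comm m n]
  exact sum_congr rfl fun i _ => by ring

lemma delannoySum_succ_left (m n : ℕ) :
    delannoySum (m + 1) n =
      delannoySum m n + ∑ i ∈ range (m + 1), 2 ^ (i + 1) * m.choose i * n.choose (i + 1) := by
  have hext : delannoySum m n = ∑ i ∈ range (m + 2), 2 ^ i * m.choose i * n.choose i := by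
    simp [delannoySum, sum_range_succ _ (m + 1)]
  rw [hext, delannoySum, sum_range_succ' _ (m + 1), sum_range_succ' _ (m + 1)]
  simp only [Nat.choose_succ_succ', add_mul, mul_add, sum_add_distrib, pow_zero,
    Nat.choose_zero_right, mul_one]
  ring

lemma sum_two_pow_choose_mul_choose_succ_succ (m n : ℕ) :
    ∑ i ∈ range (m + 1), 2 ^ (i + 1) * m.choose i * (n + 1).choose (i + 1) =
      2 * delannoySum m n + ∑ i ∈ range (m + 1), 2 ^ (i + 1) * m.choose i * n.choose (i + 1) := by
  simp only [delannoySum, Nat.choose_succ_succ', mul_add, sum_add_distrib, mul_sum, pow_succ]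
  congr 1
  exact sum_congr rfl fun i _ => by ring

lemma delannoySum_succ_succ (m n : ℕ) :
    delannoySum (m + 1) (n + 1) =
      delannoySum m (n + 1) + delannoySum (m + 1) n + delannoySum m n := by
  rw [delannoySum_succ_left, delannoySum_succ_left, sum_two_pow_choose_mul_choose_succ_succ]
  ring

theorem delannoy_eq_delannoySum (m n : ℕ) : delannoy m n = delannoySum m n := by
  induction m, n using delannoy.induct with
  | case1 m => simp [delannoy, delannoySum, sum_range_succ']
  | case2 n => simp [delannoy, delannoySum]
  | case3 m n ih₁ ih₂ ih₃ => rw [delannoy, delannoySum_succ_succ, ih₁, ih₂, ih₃]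

noncomputable def finsetSigmaEquivPi {ι : Type*} [Fintype ι] (κ : ι → Type*) :
    Finset (Σ i, κ i) ≃ ∀ i, Finset (κ i) where
  toFun S i := S.preimage (Sigma.mk i) sigma_mk_injective.injOn
  invFun f := univ.sigma f
  left_inv S := by ext ⟨i, x⟩; simp
  right_inv f := by ext i x; simp

lemma card_eq_sum_card_finsetSigmaEquivPi {ι : Type*} [Fintype ι] {κ : ι → Type*}
    (S : Finset (Σ i, κ i)) : #S = ∑ i, #(finsetSigmaEquivPi κ S i) := by
  conv_lhs => rw [← (finsetSigmaEquivPi κ).symm_apply_apply S]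
  exact card_sigma _ _

lemma card_filter_eq_coeff_sum_X_pow {ι : Type*} (s : Finset ι) (w : ι → ℕ) (k : ℕ) :
    #{i ∈ s | w i = k} = (∑ i ∈ s, (X : ℕ[X]) ^ w i).coeff k := by
  simp only [card_filter, finsetSum_coeff, coeff_X_pow, eq_comm]

lemma sum_X_pow_card_finset (α : Type*) [Fintype α] :
    ∑ B : Finset α, (X : ℕ[X]) ^ #B = (X + 1) ^ Fintype.card α := by
  simpa using Fintype.sum_pow_mul_eq_add_pow α (X : ℕ[X]) 1

lemma sum_X_pow_card_meeting_every_block {ι β : Type*} [Fintype ι] [DecidableEq ι] [Fintype β]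
    [DecidableEq β] {κ : ι → Type*} [∀ i, Fintype (κ i)] [∀ i, DecidableEq (κ i)] :
    ∑ S : Finset ((Σ i, κ i) ⊕ β) with ∀ i, ∃ x, Sum.inl ⟨i, x⟩ ∈ S, (X : ℕ[X]) ^ #S =
      (∏ i, ∑ t : Finset (κ i) with t.Nonempty, X ^ #t) * (X + 1) ^ Fintype.card β := by
  let e : Finset ((Σ i, κ i) ⊕ β) ≃ (∀ i, Finset (κ i)) × Finset β :=
    Finset.sumEquiv.toEquiv.trans ((finsetSigmaEquivPi κ).prodCongr (Equiv.refl _))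
  rw [prod_univ_sum, ← sum_X_pow_card_finset β, sum_mul_sum, ← sum_product']
  refine sum_equiv e (fun S => ?_) (fun S _ => ?_)
  · simp [e, finsetSigmaEquivPi, nonempty_iff_ne_empty, eq_empty_iff_forall_notMem]
  · simp [e, ← card_toLeft_add_card_toRight, card_eq_sum_card_finsetSigmaEquivPi S.toLeft,
      pow_add, prod_pow_eq_pow_sum]

lemma insetCount_eq_coeff (n m : ℕ) (k : ℤ) (q : Fin n → ℕ) (s : ℕ) (hs : (s : ℤ) = n + k) :
    insetCount n m k q =
      ((∏ i, ∑ t : Finset (Fin (q i)) with Finset.Nonempty t, (X : ℕ[X]) ^ #t) *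
        (X + 1) ^ m).coeff s := by
  rw [← Fintype.card_fin m, ← sum_X_pow_card_meeting_every_block,
    ← card_filter_eq_coeff_sum_X_pow, insetCount, filter_filter, Fintype.card_fin]
  simp_rw [← hs, Nat.cast_inj, and_comm]

lemma sum_X_pow_card_nonempty_fin_two :
    ∑ t : Finset (Fin 2) with t.Nonempty, (X : ℕ[X]) ^ #t = X * (X + C 2) := by
  rw [show (univ.filter Finset.Nonempty : Finset (Finset (Fin 2))) = {{0}, {1}, univ} by decide,
    sum_insert (by decide), sum_insert (by decide), sum_singleton]
  simp only [card_singleton, card_univ, Fintype.card_fin, map_ofNat C 2]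
  ring

lemma coeff_X_mul_X_add_two_pow_mul (n m : ℕ) :
    ((X * (X + C 2)) ^ n * (X + 1) ^ m : ℕ[X]).coeff (n + n) = delannoySum n m := by
  rw [mul_pow, mul_assoc, coeff_X_pow_mul, coeff_mul, ← Nat.sum_antidiagonal_swap,
    Nat.sum_antidiagonal_eq_sum_range_succ_mk]
  refine sum_congr rfl fun i hmem => ?_
  have hi : i ≤ n := Nat.lt_succ_iff.mp (mem_range.mp hmem)
  rw [Prod.fst_swap, Prod.snd_swap, coeff_X_add_C_pow, coeff_X_add_one_pow, Nat.sub_sub_self hi,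
    Nat.choose_symm hi, Nat.cast_id, Nat.cast_id]

/-- The Delannoy number `D(m,n)` equals the number of `2n`-insets of a set with `n` main
blocks of size 2 and an additional block of size `m`; equivalently
`D(m,n) = ∑_{i=0}^{m} 2^i C(m,i) C(n,i)`. -/
theorem delannoy_eq_insetCount (m n : ℕ) :
    delannoy m n = insetCount n m (n : ℤ) (fun _ => 2) ∧
    delannoy m n = ∑ i ∈ Finset.range (m + 1), 2 ^ i * m.choose i * n.choose i := by
  refine ⟨?_, delannoy_eq_delannoySum m n⟩
  rw [insetCount_eq_coeff n m n _ (n + n) (by push_cast; rfl), sum_X_pow_card_nonempty_fin_two,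
    prod_const, card_univ, Fintype.card_fin, coeff_X_mul_X_add_two_pow_mul, delannoySum_comm,
    delannoy_eq_delannoySum]
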